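/- Let R ≥ 2, g(ρ) = (1+ρ)^{−a}, Z₀(ρ) = ρ/(1+ρ²) and Z₁(ρ) = 1/(1+ρ²). For k ∈ {0,1} define φ^k(ρ) = Z_k(ρ) ∫_ρ^{4R} (1/(r Z_k(r)²)) (∫₀^r g(s) Z_k(s) s ds) dr on (0, 4R]. Then φ^k satisfies ℒ_k[φ^k] + g = 0 on (0, 4R) and φ^k(4R) = 0, and there is a constant C depending only on a such that: if 1 < a < 2 then |φ⁰(ρ)| ≤ C (1+ρ)^{−1} R² for all ρ ∈ (0, 4R], and if 0 < a < 2 then |φ¹(ρ)| ≤ C (1+ρ)^{−2} R⁴ for all ρ ∈ (0, 4R]. -/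

import Mathlib

/-!
Write `φ = Z u` with `u(ρ) = ∫_ρ^{4R} I(r) / (r Z(r)²) dr` and `I(r) = ∫_0^r g(s) Z(s) s ds`.
Then `(ρ Z² u')' = -ρ Z g`, so `ℒ_k[φ] + g = u ℒ_k[Z]` for every `Z` and `k`, and the equations
hold because `ℒ₀[Z₀] = 0` and `ℒ₁[Z₁] = 0`.

For the bounds, `I` is estimated near the origin (`I ≤ r³` for `Z₀`, `I ≤ r²` for `Z₁`) and
globally (`I ≤ 1/(a-1)`, resp. `I ≤ 2/a`: this is where the restrictions on `a` enter). The
inequality `(1+r²)² ≤ 2(1+r⁴)` interpolates between the two, so the outer integrand is `O(R)`,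
resp. `O(R³)`, on `(0, 4R]`; it remains to use `Z₀ ≤ 2/(1+ρ)` and `Z₁ ≤ 2/(1+ρ)²`.
-/

noncomputable section

open Real Set MeasureTheory

/-- The 1-corrotational harmonic map profile `w(ρ) = π - 2 arctan ρ`. -/
def wfun (ρ : ℝ) : ℝ := Real.pi - 2 * Real.arctan ρ

/-- The mode-`k` operator `ℒ_k[φ](ρ) = φ'' + φ'/ρ − (k² + 2k cos w + cos 2w) φ/ρ²`. -/
def Lmode (k : ℤ) (φ : ℝ → ℝ) (ρ : ℝ) : ℝ :=
  deriv (deriv φ) ρ + deriv φ ρ / ρ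
    - ((k : ℝ) ^ 2 + 2 * (k : ℝ) * Real.cos (wfun ρ) + Real.cos (2 * wfun ρ)) * φ ρ / ρ ^ 2

/-- The kernel element `Z₀(ρ) = ρ/(1+ρ²)` of `ℒ₀`. -/
def Z0 (ρ : ℝ) : ℝ := ρ / (1 + ρ ^ 2)

/-- The kernel element `Z₁(ρ) = 1/(1+ρ²)` of `ℒ₁`. -/
def Z1 (ρ : ℝ) : ℝ := 1 / (1 + ρ ^ 2)

/-- The right-hand side `g(ρ) = (1+ρ)^{-a}`. -/
def gfun (a ρ : ℝ) : ℝ := (1 + ρ) ^ (-a)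

/-- The variation-of-parameters solution built from a kernel element `Z`:
`φ(ρ) = Z(ρ) ∫_ρ^{4R} (1/(r Z(r)²)) (∫₀^r g(s) Z(s) s ds) dr`. -/
def phiVar (Z : ℝ → ℝ) (a R ρ : ℝ) : ℝ :=
  Z ρ * ∫ r in ρ..(4 * R),
    (1 / (r * Z r ^ 2)) * ∫ s in (0 : ℝ)..r, gfun a s * Z s * s

open Filter Topology

def sourceMoment (Z : ℝ → ℝ) (a r : ℝ) : ℝ := ∫ s in (0 : ℝ)..r, gfun a s * Z s * s

def phiIntegrand (Z : ℝ → ℝ) (a r : ℝ) : ℝ := 1 / (r * Z r ^ 2) * sourceMoment Z a r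

theorem phiVar_eq (Z : ℝ → ℝ) (a R ρ : ℝ) :
    phiVar Z a R ρ = Z ρ * ∫ r in ρ..(4 * R), phiIntegrand Z a r := rfl

theorem phiVar_four_mul_self (Z : ℝ → ℝ) (a R : ℝ) : phiVar Z a R (4 * R) = 0 := by
  rw [phiVar_eq, intervalIntegral.integral_same, mul_zero]

section VariationOfParameters

variable {Z : ℝ → ℝ} {a : ℝ}

theorem continuousOn_gfun (a : ℝ) : ContinuousOn (gfun a) (Ioi (-1)) :=
  (continuousOn_const.add continuousOn_id).rpow_const fun s hs =>
    Or.inl (ne_of_gt (show (0 : ℝ) < 1 + s by linarith [mem_Ioi.1 hs]))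

theorem continuousOn_sourceIntegrand (hZ : Continuous Z) :
    ContinuousOn (fun s => gfun a s * Z s * s) (Ioi (-1)) :=
  ((continuousOn_gfun a).mul hZ.continuousOn).mul continuousOn_id

theorem hasDerivAt_sourceMoment (hZ : Continuous Z) {r : ℝ} (hr : -1 < r) :
    HasDerivAt (sourceMoment Z a) (gfun a r * Z r * r) r := by
  have hcont := continuousOn_sourceIntegrand (a := a) hZ
  refine intervalIntegral.integral_hasDerivAt_right ?_
    (hcont.stronglyMeasurableAtFilter isOpen_Ioi r hr) (hcont.continuousAt (Ioi_mem_nhds hr))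
  exact (hcont.mono (ordConnected_Ioi.uIcc_subset (by norm_num) hr)).intervalIntegrable

theorem continuousOn_phiIntegrand (hZ : Continuous Z) (hZ0 : ∀ x, 0 < x → Z x ≠ 0) :
    ContinuousOn (phiIntegrand Z a) (Ioi 0) := by
  refine ContinuousOn.mul ?_ fun r hr =>
    (hasDerivAt_sourceMoment hZ (by linarith [mem_Ioi.1 hr])).continuousAt.continuousWithinAt
  exact continuousOn_const.div (continuousOn_id.mul (hZ.continuousOn.pow 2))
    fun r hr => mul_ne_zero (ne_of_gt hr) (pow_ne_zero 2 (hZ0 r hr))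

theorem hasDerivAt_integral_phiIntegrand (hZ : Continuous Z) (hZ0 : ∀ x, 0 < x → Z x ≠ 0)
    {b x : ℝ} (hb : 0 < b) (hx : 0 < x) :
    HasDerivAt (fun x => ∫ r in x..b, phiIntegrand Z a r) (-phiIntegrand Z a x) x := by
  have hcont := continuousOn_phiIntegrand (a := a) hZ hZ0
  refine intervalIntegral.integral_hasDerivAt_left ?_
    (hcont.stronglyMeasurableAtFilter isOpen_Ioi x hx) (hcont.continuousAt (Ioi_mem_nhds hx))
  exact (hcont.mono (ordConnected_Ioi.uIcc_subset hx hb)).intervalIntegrable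

theorem hasDerivAt_phiIntegrand (hZ : Differentiable ℝ Z) (hZ0 : ∀ x, 0 < x → Z x ≠ 0)
    {r : ℝ} (hr : 0 < r) :
    HasDerivAt (phiIntegrand Z a)
      (gfun a r / Z r - (Z r + 2 * r * deriv Z r) / (r ^ 2 * Z r ^ 3) * sourceMoment Z a r) r := by
  have hZr := hZ0 r hr
  have hden : HasDerivAt (fun r => r * Z r ^ 2) (Z r ^ 2 + r * (2 * Z r * deriv Z r)) r := by
    simpa using (hasDerivAt_id r).fun_mul ((hZ r).hasDerivAt.fun_pow 2)
  refine (((hasDerivAt_const r (1 : ℝ)).fun_div hden (by positivity)).fun_mul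
    (hasDerivAt_sourceMoment (a := a) hZ.continuous (by linarith))).congr_deriv ?_
  field_simp
  ring

theorem hasDerivAt_phiVar (hZ : Differentiable ℝ Z) (hZ0 : ∀ x, 0 < x → Z x ≠ 0)
    {R ρ : ℝ} (hR : 0 < R) (hρ : 0 < ρ) :
    HasDerivAt (phiVar Z a R)
      (deriv Z ρ * (∫ r in ρ..(4 * R), phiIntegrand Z a r) - Z ρ * phiIntegrand Z a ρ) ρ :=
  ((hZ ρ).hasDerivAt.fun_mul (hasDerivAt_integral_phiIntegrand (a := a) hZ.continuous hZ0
    (by positivity : 0 < 4 * R) hρ)).congr_deriv (by ring)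

theorem deriv_deriv_phiVar_add (hZ : Differentiable ℝ Z) (hZ' : Differentiable ℝ (deriv Z))
    (hZ0 : ∀ x, 0 < x → Z x ≠ 0) {R ρ : ℝ} (hR : 0 < R) (hρ : 0 < ρ) :
    deriv (deriv (phiVar Z a R)) ρ + deriv (phiVar Z a R) ρ / ρ =
      (deriv (deriv Z) ρ + deriv Z ρ / ρ) * (∫ r in ρ..(4 * R), phiIntegrand Z a r)
        - gfun a ρ := by
  have hderiv : deriv (phiVar Z a R) =ᶠ[𝓝 ρ] fun x =>
      deriv Z x * (∫ r in x..(4 * R), phiIntegrand Z a r) - Z x * phiIntegrand Z a x := by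
    filter_upwards [Ioi_mem_nhds hρ] with x hx using (hasDerivAt_phiVar hZ hZ0 hR hx).deriv
  have hderiv2 := ((hZ' ρ).hasDerivAt.fun_mul (hasDerivAt_integral_phiIntegrand (a := a)
      hZ.continuous hZ0 (by positivity : 0 < 4 * R) hρ)).fun_sub
    ((hZ ρ).hasDerivAt.fun_mul (hasDerivAt_phiIntegrand (a := a) hZ hZ0 hρ))
  rw [hderiv.deriv_eq, hderiv2.deriv, (hasDerivAt_phiVar hZ hZ0 hR hρ).deriv, phiIntegrand]
  have hZρ := hZ0 ρ hρ
  field_simp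
  ring

theorem Lmode_phiVar_add_gfun (k : ℤ) (hZ : Differentiable ℝ Z)
    (hZ' : Differentiable ℝ (deriv Z)) (hZ0 : ∀ x, 0 < x → Z x ≠ 0) {R ρ : ℝ} (hR : 0 < R)
    (hρ : 0 < ρ) :
    Lmode k (phiVar Z a R) ρ + gfun a ρ =
      Lmode k Z ρ * ∫ r in ρ..(4 * R), phiIntegrand Z a r := by
  rw [Lmode, Lmode, deriv_deriv_phiVar_add hZ hZ' hZ0 hR hρ, phiVar_eq]
  ring

end VariationOfParameters

theorem cos_wfun (ρ : ℝ) : Real.cos (wfun ρ) = (ρ ^ 2 - 1) / (1 + ρ ^ 2) := by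
  have hsq : Real.sqrt (1 + ρ ^ 2) ^ 2 = 1 + ρ ^ 2 := Real.sq_sqrt (by positivity)
  rw [wfun, Real.cos_pi_sub, Real.cos_two_mul, Real.cos_arctan, div_pow, one_pow, hsq]
  field_simp
  ring

theorem hasDerivAt_one_add_sq (x : ℝ) : HasDerivAt (fun y : ℝ => 1 + y ^ 2) (2 * x) x := by
  simpa using (hasDerivAt_pow 2 x).const_add 1

theorem hasDerivAt_Z0 (x : ℝ) : HasDerivAt Z0 ((1 - x ^ 2) / (1 + x ^ 2) ^ 2) x := by
  refine ((hasDerivAt_id' x).fun_div (hasDerivAt_one_add_sq x) (by positivity)).congr_deriv ?_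
  ring

theorem hasDerivAt_deriv_Z0 (x : ℝ) :
    HasDerivAt (deriv Z0) ((2 * x ^ 3 - 6 * x) / (1 + x ^ 2) ^ 3) x := by
  rw [show deriv Z0 = _ from funext fun y => (hasDerivAt_Z0 y).deriv]
  refine ((((hasDerivAt_pow 2 x).const_sub 1).fun_div ((hasDerivAt_one_add_sq x).fun_pow 2)
    (by positivity))).congr_deriv ?_
  field_simp
  ring

theorem hasDerivAt_Z1 (x : ℝ) : HasDerivAt Z1 (-2 * x / (1 + x ^ 2) ^ 2) x := by
  refine ((hasDerivAt_const x 1).fun_div (hasDerivAt_one_add_sq x) (by positivity)).congr_deriv ?_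
  ring

theorem hasDerivAt_deriv_Z1 (x : ℝ) :
    HasDerivAt (deriv Z1) ((6 * x ^ 2 - 2) / (1 + x ^ 2) ^ 3) x := by
  rw [show deriv Z1 = _ from funext fun y => (hasDerivAt_Z1 y).deriv]
  refine (((hasDerivAt_id' x).const_mul (-2)).fun_div ((hasDerivAt_one_add_sq x).fun_pow 2)
    (by positivity)).congr_deriv ?_
  field_simp
  ring

theorem differentiable_Z0 : Differentiable ℝ Z0 := fun x => (hasDerivAt_Z0 x).differentiableAt

theorem differentiable_deriv_Z0 : Differentiable ℝ (deriv Z0) := fun x =>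
  (hasDerivAt_deriv_Z0 x).differentiableAt

theorem differentiable_Z1 : Differentiable ℝ Z1 := fun x => (hasDerivAt_Z1 x).differentiableAt

theorem differentiable_deriv_Z1 : Differentiable ℝ (deriv Z1) := fun x =>
  (hasDerivAt_deriv_Z1 x).differentiableAt

theorem Z0_pos {x : ℝ} (hx : 0 < x) : 0 < Z0 x := div_pos hx (by positivity)

theorem Z0_nonneg {x : ℝ} (hx : 0 ≤ x) : 0 ≤ Z0 x := div_nonneg hx (by positivity)

theorem Z1_pos (x : ℝ) : 0 < Z1 x := div_pos one_pos (by positivity)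

theorem Lmode_zero_Z0 {ρ : ℝ} (hρ : ρ ≠ 0) : Lmode 0 Z0 ρ = 0 := by
  rw [Lmode, (hasDerivAt_deriv_Z0 ρ).deriv, (hasDerivAt_Z0 ρ).deriv, Real.cos_two_mul, cos_wfun,
    Z0]
  field_simp
  ring

theorem Lmode_one_Z1 {ρ : ℝ} (hρ : ρ ≠ 0) : Lmode 1 Z1 ρ = 0 := by
  rw [Lmode, (hasDerivAt_deriv_Z1 ρ).deriv, (hasDerivAt_Z1 ρ).deriv, Real.cos_two_mul, cos_wfun,
    Z1]
  field_simp
  ring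

section Bounds

variable {Z : ℝ → ℝ} {a : ℝ}

theorem gfun_nonneg (a : ℝ) {s : ℝ} (hs : 0 ≤ s) : 0 ≤ gfun a s :=
  Real.rpow_nonneg (by linarith) _

theorem gfun_le_one (ha : 0 ≤ a) {s : ℝ} (hs : 0 ≤ s) : gfun a s ≤ 1 :=
  Real.rpow_le_one_of_one_le_of_nonpos (by linarith) (by linarith)

theorem intervalIntegrable_gfun (a : ℝ) {r : ℝ} (hr : 0 ≤ r) :
    IntervalIntegrable (gfun a) volume 0 r :=
  ((continuousOn_gfun a).mono
    (ordConnected_Ioi.uIcc_subset (by norm_num) (mem_Ioi.2 (by linarith)))).intervalIntegrable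

theorem integral_gfun_le (ha : 1 < a) {r : ℝ} (hr : 0 ≤ r) :
    ∫ s in (0 : ℝ)..r, gfun a s ≤ (a - 1)⁻¹ := by
  have hshift : ∫ s in (0 : ℝ)..r, gfun a s = ∫ x in (1 : ℝ)..(1 + r), x ^ (-a) := by
    simpa [gfun] using intervalIntegral.integral_comp_add_left (fun x : ℝ => x ^ (-a)) (1 : ℝ)
      (a := 0) (b := r)
  have h0 : (0 : ℝ) ∉ uIcc 1 (1 + r) := by
    rw [uIcc_of_le (by linarith)]
    exact fun h => absurd h.1 (by norm_num)
  rw [hshift, integral_rpow (Or.inr ⟨by linarith, h0⟩), Real.one_rpow,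
    show -a + 1 = -(a - 1) by ring, div_neg, ← neg_div, neg_sub]
  have : 0 ≤ (1 + r) ^ (-(a - 1)) := Real.rpow_nonneg (by linarith) _
  rw [div_eq_mul_inv]
  nlinarith [inv_pos.2 (sub_pos.2 ha)]

theorem sourceMoment_nonneg (hZ : ∀ s, 0 ≤ s → 0 ≤ Z s) {r : ℝ} (hr : 0 ≤ r) :
    0 ≤ sourceMoment Z a r :=
  intervalIntegral.integral_nonneg hr fun s hs =>
    mul_nonneg (mul_nonneg (gfun_nonneg a hs.1) (hZ s hs.1)) hs.1

theorem sourceMoment_le_integral (hZ : Continuous Z) {r : ℝ} (hr : 0 ≤ r) {f : ℝ → ℝ}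
    (hf : IntervalIntegrable f volume 0 r) (hle : ∀ s ∈ Icc 0 r, gfun a s * Z s * s ≤ f s) :
    sourceMoment Z a r ≤ ∫ s in (0 : ℝ)..r, f s := by
  refine intervalIntegral.integral_mono_on hr ?_ hf hle
  exact ((continuousOn_sourceIntegrand hZ).mono
    (ordConnected_Ioi.uIcc_subset (by norm_num) (mem_Ioi.2 (by linarith)))).intervalIntegrable

theorem sourceMoment_le_of_le_const (hZ : Continuous Z) {r M : ℝ} (hr : 0 ≤ r)
    (hle : ∀ s ∈ Icc 0 r, gfun a s * Z s * s ≤ M) : sourceMoment Z a r ≤ M * r := by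
  simpa [mul_comm] using sourceMoment_le_integral hZ hr intervalIntegrable_const hle

theorem Z0_mul_self_le_sq (s : ℝ) : Z0 s * s ≤ s ^ 2 := by
  rw [Z0, div_mul_eq_mul_div, div_le_iff₀ (by positivity)]
  nlinarith [sq_nonneg s, sq_nonneg (s ^ 2)]

theorem Z0_mul_self_le_one (s : ℝ) : Z0 s * s ≤ 1 := by
  rw [Z0, div_mul_eq_mul_div, div_le_one (by positivity)]
  nlinarith

theorem Z1_le_one (s : ℝ) : Z1 s ≤ 1 := by
  rw [Z1, div_le_one (by positivity)]
  nlinarith [sq_nonneg s]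

theorem Z1_mul_self_le {s : ℝ} (hs : 0 ≤ s) : Z1 s * s ≤ 2 * (1 + s)⁻¹ := by
  rw [Z1, ← div_eq_mul_inv, div_mul_eq_mul_div, one_mul, div_le_div_iff₀ (by positivity)
    (by positivity)]
  nlinarith [sq_nonneg (s - 1)]

theorem sourceMoment_Z0_le_cube (ha : 0 ≤ a) {r : ℝ} (hr : 0 ≤ r) :
    sourceMoment Z0 a r ≤ r ^ 3 := by
  refine (sourceMoment_le_of_le_const (M := r ^ 2) differentiable_Z0.continuous hr
    fun s hs => ?_).trans_eq (by ring)
  calc gfun a s * Z0 s * s = gfun a s * (Z0 s * s) := mul_assoc _ _ _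
    _ ≤ 1 * r ^ 2 := mul_le_mul (gfun_le_one ha hs.1)
        ((Z0_mul_self_le_sq s).trans (pow_le_pow_left₀ hs.1 hs.2 2))
        (mul_nonneg (Z0_nonneg hs.1) hs.1) zero_le_one
    _ = r ^ 2 := one_mul _

theorem sourceMoment_Z0_le (ha : 1 < a) {r : ℝ} (hr : 0 ≤ r) :
    sourceMoment Z0 a r ≤ (a - 1)⁻¹ := by
  refine (sourceMoment_le_integral differentiable_Z0.continuous hr (intervalIntegrable_gfun a hr)
    fun s hs => ?_).trans (integral_gfun_le ha hr)
  rw [mul_assoc]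
  exact mul_le_of_le_one_right (gfun_nonneg a hs.1) (Z0_mul_self_le_one s)

theorem sourceMoment_Z1_le_sq (ha : 0 ≤ a) {r : ℝ} (hr : 0 ≤ r) :
    sourceMoment Z1 a r ≤ r ^ 2 := by
  refine (sourceMoment_le_of_le_const (M := r) differentiable_Z1.continuous hr
    fun s hs => ?_).trans_eq (by ring)
  calc gfun a s * Z1 s * s ≤ 1 * 1 * r :=
        mul_le_mul (mul_le_mul (gfun_le_one ha hs.1) (Z1_le_one s) (Z1_pos s).le zero_le_one)
          hs.2 hs.1 (by norm_num)
    _ = r := by ring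

theorem sourceMoment_Z1_le (ha : 0 < a) {r : ℝ} (hr : 0 ≤ r) :
    sourceMoment Z1 a r ≤ 2 * a⁻¹ := by
  have hdecay : ∫ s in (0 : ℝ)..r, 2 * gfun (a + 1) s ≤ 2 * a⁻¹ := by
    rw [intervalIntegral.integral_const_mul]
    simpa using mul_le_mul_of_nonneg_left (integral_gfun_le (a := a + 1) (by linarith) hr)
      zero_le_two
  refine (sourceMoment_le_integral differentiable_Z1.continuous hr
    ((intervalIntegrable_gfun (a + 1) hr).const_mul 2) fun s hs => ?_).trans hdecay
  have hsplit : gfun (a + 1) s = gfun a s * (1 + s)⁻¹ := by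
    rw [gfun, gfun, neg_add, Real.rpow_add (by linarith [hs.1]), Real.rpow_neg_one]
  rw [hsplit, mul_assoc, mul_left_comm 2]
  exact mul_le_mul_of_nonneg_left (Z1_mul_self_le hs.1) (gfun_nonneg a hs.1)

end Bounds

theorem one_add_sq_sq_mul_le {r I x y : ℝ} (hI : 0 ≤ I) (hx : I ≤ x) (hy : I ≤ y) :
    (1 + r ^ 2) ^ 2 * I ≤ 2 * x + 2 * r ^ 4 * y := by
  nlinarith [mul_nonneg (sq_nonneg (r ^ 2 - 1)) hI,
    mul_le_mul_of_nonneg_left hy (by positivity : (0 : ℝ) ≤ r ^ 4)]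

theorem abs_phiIntegrand_Z0_le {a r : ℝ} (ha : 1 < a) (hr : 0 < r) :
    |phiIntegrand Z0 a r| ≤ 2 + 2 * (a - 1)⁻¹ * r := by
  have hI := sourceMoment_nonneg (a := a) (fun s hs => Z0_nonneg hs) hr.le
  have hweight : 1 / (r * Z0 r ^ 2) = (1 + r ^ 2) ^ 2 / r ^ 3 := by
    rw [Z0]
    field_simp
  rw [phiIntegrand, hweight, abs_of_nonneg (by positivity), div_mul_eq_mul_div,
    div_le_iff₀ (by positivity)]
  calc (1 + r ^ 2) ^ 2 * sourceMoment Z0 a r ≤ 2 * r ^ 3 + 2 * r ^ 4 * (a - 1)⁻¹ :=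
        one_add_sq_sq_mul_le hI (sourceMoment_Z0_le_cube (by linarith) hr.le)
          (sourceMoment_Z0_le ha hr.le)
    _ = (2 + 2 * (a - 1)⁻¹ * r) * r ^ 3 := by ring

theorem abs_phiIntegrand_Z1_le {a r : ℝ} (ha : 0 < a) (hr : 0 < r) :
    |phiIntegrand Z1 a r| ≤ 2 * r + 4 * a⁻¹ * r ^ 3 := by
  have hI := sourceMoment_nonneg (a := a) (fun s _ => (Z1_pos s).le) hr.le
  have hweight : 1 / (r * Z1 r ^ 2) = (1 + r ^ 2) ^ 2 / r := by
    rw [Z1]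
    field_simp
  rw [phiIntegrand, hweight, abs_of_nonneg (by positivity), div_mul_eq_mul_div,
    div_le_iff₀ hr]
  calc (1 + r ^ 2) ^ 2 * sourceMoment Z1 a r ≤ 2 * r ^ 2 + 2 * r ^ 4 * (2 * a⁻¹) :=
        one_add_sq_sq_mul_le hI (sourceMoment_Z1_le_sq ha.le hr.le) (sourceMoment_Z1_le ha hr.le)
    _ = (2 * r + 4 * a⁻¹ * r ^ 3) * r := by ring

theorem abs_phiVar_le {Z : ℝ → ℝ} {a R ρ M : ℝ} (hρ : ρ ≤ 4 * R)
    (hM : ∀ r ∈ Ioc ρ (4 * R), |phiIntegrand Z a r| ≤ M) :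
    |phiVar Z a R ρ| ≤ |Z ρ| * (M * (4 * R - ρ)) := by
  rw [phiVar_eq, abs_mul]
  gcongr
  have h := intervalIntegral.norm_integral_le_of_norm_le_const (a := ρ) (b := 4 * R)
    (f := phiIntegrand Z a) (C := M) (by rw [uIoc_of_le hρ]; exact hM)
  rwa [Real.norm_eq_abs, abs_of_nonneg (sub_nonneg.2 hρ)] at h

theorem Z0_le {ρ : ℝ} (hρ : 0 ≤ ρ) : Z0 ρ ≤ 2 * (1 + ρ)⁻¹ := by
  rw [Z0, ← div_eq_mul_inv, div_le_div_iff₀ (by positivity) (by positivity)]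
  nlinarith [sq_nonneg (ρ - 1)]

theorem Z1_le {ρ : ℝ} (hρ : 0 ≤ ρ) : Z1 ρ ≤ 2 * (1 + ρ) ^ (-(2 : ℝ)) := by
  rw [Real.rpow_neg (by positivity), Real.rpow_two, Z1, ← div_eq_mul_inv,
    div_le_div_iff₀ (by positivity) (by positivity)]
  nlinarith [sq_nonneg (ρ - 1)]

theorem abs_phiVar_Z0_le {a R ρ : ℝ} (ha : 1 < a) (hR : 2 ≤ R) (hρ : 0 < ρ) (hρR : ρ ≤ 4 * R) :
    |phiVar Z0 a R ρ| ≤ (8 + 64 * (a - 1)⁻¹) * (1 + ρ)⁻¹ * R ^ 2 := by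
  have hc : 0 < (a - 1)⁻¹ := inv_pos.2 (by linarith)
  have hM : ∀ r ∈ Ioc ρ (4 * R), |phiIntegrand Z0 a r| ≤ 2 + 8 * (a - 1)⁻¹ * R := fun r hr =>
    (abs_phiIntegrand_Z0_le ha (hρ.trans hr.1)).trans (by nlinarith [hr.2])
  calc |phiVar Z0 a R ρ| ≤ |Z0 ρ| * ((2 + 8 * (a - 1)⁻¹ * R) * (4 * R - ρ)) := abs_phiVar_le hρR hM
    _ ≤ 2 * (1 + ρ)⁻¹ * ((2 + 8 * (a - 1)⁻¹ * R) * (4 * R)) := by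
        rw [abs_of_nonneg (Z0_nonneg hρ.le)]
        gcongr
        · exact Z0_le hρ.le
        · linarith
    _ = (1 + ρ)⁻¹ * (16 * R + 64 * (a - 1)⁻¹ * R ^ 2) := by ring
    _ ≤ (1 + ρ)⁻¹ * ((8 + 64 * (a - 1)⁻¹) * R ^ 2) := by gcongr; nlinarith
    _ = (8 + 64 * (a - 1)⁻¹) * (1 + ρ)⁻¹ * R ^ 2 := by ring

theorem abs_phiVar_Z1_le {a R ρ : ℝ} (ha : 0 < a) (hR : 2 ≤ R) (hρ : 0 < ρ) (hρR : ρ ≤ 4 * R) :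
    |phiVar Z1 a R ρ| ≤ (16 + 2048 * a⁻¹) * (1 + ρ) ^ (-(2 : ℝ)) * R ^ 4 := by
  have hc : 0 < a⁻¹ := inv_pos.2 ha
  have hM : ∀ r ∈ Ioc ρ (4 * R), |phiIntegrand Z1 a r| ≤ 8 * R + 256 * a⁻¹ * R ^ 3 :=
    fun r hr => (abs_phiIntegrand_Z1_le ha (hρ.trans hr.1)).trans <| by
      have hr3 : r ^ 3 ≤ (4 * R) ^ 3 := pow_le_pow_left₀ (hρ.trans hr.1).le hr.2 3
      nlinarith [hr.2]
  calc |phiVar Z1 a R ρ| ≤ |Z1 ρ| * ((8 * R + 256 * a⁻¹ * R ^ 3) * (4 * R - ρ)) :=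
        abs_phiVar_le hρR hM
    _ ≤ 2 * (1 + ρ) ^ (-(2 : ℝ)) * ((8 * R + 256 * a⁻¹ * R ^ 3) * (4 * R)) := by
        rw [abs_of_pos (Z1_pos ρ)]
        gcongr
        · exact Z1_le hρ.le
        · linarith
    _ = (1 + ρ) ^ (-(2 : ℝ)) * (64 * R ^ 2 + 2048 * a⁻¹ * R ^ 4) := by ring
    _ ≤ (1 + ρ) ^ (-(2 : ℝ)) * ((16 + 2048 * a⁻¹) * R ^ 4) := by
        gcongr
        nlinarith [mul_le_mul hR hR (by norm_num) (by linarith : (0 : ℝ) ≤ R)]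
    _ = (16 + 2048 * a⁻¹) * (1 + ρ) ^ (-(2 : ℝ)) * R ^ 4 := by ring

/-- The variation-of-parameters solutions at modes `0` and `1` solve `ℒ_k[φ^k] + g = 0`
on `(0, 4R)`, vanish at `4R`, and satisfy the stated weighted bounds with a constant `C`
depending only on `a`. -/
theorem mode_zero_and_one_barriers (a : ℝ) :
    ∃ C > 0, ∀ R : ℝ, 2 ≤ R →
      (∀ ρ : ℝ, 0 < ρ → ρ < 4 * R → Lmode 0 (phiVar Z0 a R) ρ + gfun a ρ = 0) ∧
      phiVar Z0 a R (4 * R) = 0 ∧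
      (∀ ρ : ℝ, 0 < ρ → ρ < 4 * R → Lmode 1 (phiVar Z1 a R) ρ + gfun a ρ = 0) ∧
      phiVar Z1 a R (4 * R) = 0 ∧
      (1 < a → a < 2 →
        ∀ ρ : ℝ, 0 < ρ → ρ ≤ 4 * R → |phiVar Z0 a R ρ| ≤ C * (1 + ρ)⁻¹ * R ^ 2) ∧
      (0 < a → a < 2 →
        ∀ ρ : ℝ, 0 < ρ → ρ ≤ 4 * R → |phiVar Z1 a R ρ| ≤ C * (1 + ρ)^(-(2:ℝ)) * R ^ 4) := by
  set C₀ := 8 + 64 * (a - 1)⁻¹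
  set C₁ := 16 + 2048 * a⁻¹
  refine ⟨max (max C₀ C₁) 1, lt_max_of_lt_right one_pos, fun R hR => ?_⟩
  have hR0 : 0 < R := by linarith
  refine ⟨fun ρ hρ _ => ?_, phiVar_four_mul_self Z0 a R, fun ρ hρ _ => ?_,
    phiVar_four_mul_self Z1 a R, fun ha _ ρ hρ hρR => ?_, fun ha _ ρ hρ hρR => ?_⟩
  · rw [Lmode_phiVar_add_gfun 0 differentiable_Z0 differentiable_deriv_Z0
      (fun x hx => (Z0_pos hx).ne') hR0 hρ, Lmode_zero_Z0 hρ.ne', zero_mul]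
  · rw [Lmode_phiVar_add_gfun 1 differentiable_Z1 differentiable_deriv_Z1
      (fun x _ => (Z1_pos x).ne') hR0 hρ, Lmode_one_Z1 hρ.ne', zero_mul]
  · refine (abs_phiVar_Z0_le ha hR hρ hρR).trans ?_
    gcongr
    exact (le_max_left _ _).trans (le_max_left _ _)
  · refine (abs_phiVar_Z1_le ha hR hρ hρR).trans ?_
    gcongr
    exact (le_max_right _ _).trans (le_max_left _ _)
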